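/- Let (E,e) be a matrix factorization of w over S with a connection ∇ and θ = [∇,e]. For every even q ≥ 0, dw ∧ str((∧ ⊗ 1_E) ∘ θ^q) = 0 in ⋀^{q+1}Ω. Consequently the Chern character of a matrix factorization admitting a global connection, ch(E) = str(Σ_{q} [∇,e]^q/q!), is a cocycle in the 2-periodic complex (⊕_q ⋀^qΩ, dw ∧ −). -/

import Mathlib

set_option maxHeartbeats 1000000

open scoped TensorProduct
open PiTensorProduct

/-- Odd differential of a matrix factorization on the total module. -/
noncomputable def mfDiff {S E₀ E₁ : Type*} [CommRing S]
    [AddCommGroup E₀] [AddCommGroup E₁] [Module S E₀] [Module S E₁]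
    (e₀ : E₀ →ₗ[S] E₁) (e₁ : E₁ →ₗ[S] E₀) : (E₀ × E₁) →ₗ[S] (E₀ × E₁) :=
  LinearMap.prod (e₁ ∘ₗ LinearMap.snd S E₀ E₁) (e₀ ∘ₗ LinearMap.fst S E₀ E₁)

/-- A pair of connections on the graded components assembled on the total module. -/
noncomputable def connPair {k S E₀ E₁ : Type*} [Field k] [CommRing S] [Algebra k S]
    [AddCommGroup E₀] [AddCommGroup E₁] [Module S E₀] [Module S E₁]
    [Module k E₀] [Module k E₁] [IsScalarTower k S E₀] [IsScalarTower k S E₁]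
    (na₀ : E₀ →ₗ[k] (Ω[S⁄k] ⊗[S] E₀)) (na₁ : E₁ →ₗ[k] (Ω[S⁄k] ⊗[S] E₁)) :
    (E₀ × E₁) → (Ω[S⁄k] ⊗[S] (E₀ × E₁)) :=
  fun x => (LinearMap.lTensor (Ω[S⁄k]) (LinearMap.inl S E₀ E₁)) (na₀ x.1)
    + (LinearMap.lTensor (Ω[S⁄k]) (LinearMap.inr S E₀ E₁)) (na₁ x.2)

/-- The `N`-valued trace of a map `G : V → N ⊗ V` on a finite free module `V`,
computed with respect to a basis `b` (equivalently, the canonical contraction). -/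
noncomputable def coefTrace {S V N : Type*} [CommRing S] [AddCommGroup V] [Module S V]
    [AddCommGroup N] [Module S N] {n : ℕ} (b : Module.Basis (Fin n) S V)
    (G : V →ₗ[S] N ⊗[S] V) : N :=
  ∑ j : Fin n, (TensorProduct.rid S N) ((LinearMap.lTensor N (b.coord j)) (G (b j)))

/-!
In the basis of `E₀ × E₁` assembled from `b₀` and `b₁`, `θ = [∇, e]` becomes a matrix `N` of
one-forms that is odd (it exchanges `E₀` and `E₁`), and `e` a matrix `Q` of functions.
Differentiating `e² = w` by the Leibniz rule gives `Q N + N Q = dw`, and the wedged supertrace of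
`θ^q` is `str (N^q)` computed in `⋀ Ω`. Hence
`dw ∧ str (N^q) = str (Q N^(q+1)) + str (N · Q N^q)`. For even `q` the entries of `Q N^q` have
even degree, so they commute with the one-forms in `N`, and moving the odd matrix `N` to the other
side of a supertrace costs a sign: `str (N · Q N^q) = -str (Q N^q · N)`. The two terms cancel.
-/

namespace ExteriorAlgebra

variable {R M : Type*} [CommRing R] [AddCommGroup M] [Module R M]

theorem ιMulti_snoc {q : ℕ} (ω : Fin q → M) (μ : M) :
    ιMulti R (q + 1) (Fin.snoc ω μ) = ιMulti R q ω * ι R μ := by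
  rw [ιMulti_apply, ιMulti_apply, List.ofFn_succ']
  simp [Fin.snoc_castSucc, Fin.snoc_last]

theorem ι_mul_eq_neg_one_pow_smul {r : ℕ} {x : ExteriorAlgebra R M}
    (hx : x ∈ LinearMap.range (ι R) ^ r) (v : M) :
    ι R v * x = (-1 : R) ^ r • (x * ι R v) := by
  induction hx using Submodule.pow_induction_on_left' with
  | algebraMap a => simp [Algebra.commutes]
  | add x y i _ _ hx hy => rw [mul_add, hx, hy, add_mul, smul_add]
  | mem_mul m hm i x _ hx =>
    obtain ⟨u, rfl⟩ := hm
    have hvu : ι R v * ι R u = -(ι R u * ι R v) :=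
      eq_neg_of_add_eq_zero_left (ι_add_mul_swap v u)
    rw [← mul_assoc, hvu, neg_mul, mul_assoc, hx, mul_smul_comm, pow_succ, mul_neg_one, neg_smul,
      mul_assoc]

theorem commute_ι_of_mem_pow {r : ℕ} (hr : Even r) {x : ExteriorAlgebra R M}
    (hx : x ∈ LinearMap.range (ι R) ^ r) (v : M) : Commute (ι R v) x := by
  rw [Commute, SemiconjBy, ι_mul_eq_neg_one_pow_smul hx, hr.neg_one_pow, one_smul]

end ExteriorAlgebra

namespace Matrix

variable {ι m n α : Type*} [Fintype ι] [Fintype m] [Fintype n]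

theorem pow_apply_mem_pow {R A : Type*} [CommSemiring R] [Semiring A] [Algebra R A]
    [DecidableEq ι] {P : Submodule R A} {N : Matrix ι ι A} (hN : ∀ i j, N i j ∈ P) (r : ℕ)
    (i j : ι) : (N ^ r) i j ∈ P ^ r := by
  induction r generalizing j with
  | zero =>
    rw [pow_zero N, one_apply, pow_zero]
    split_ifs
    · exact Submodule.one_le.mp le_rfl
    · exact zero_mem _
  | succ r ih =>
    rw [pow_succ N, mul_apply, pow_succ]
    exact Submodule.sum_mem _ fun l _ => Submodule.mul_mem_mul (ih l) (hN l j)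

theorem trace_mul_comm_of_commute [NonUnitalSemiring α] {A : Matrix m n α} {B : Matrix n m α}
    (h : ∀ i j, Commute (A i j) (B j i)) : trace (A * B) = trace (B * A) := by
  simp only [trace, diag, mul_apply]
  rw [Finset.sum_comm]
  exact Finset.sum_congr rfl fun j _ => Finset.sum_congr rfl fun i _ => h i j

def supertrace [AddCommGroup α] (X : Matrix (m ⊕ n) (m ⊕ n) α) : α :=
  X.toBlocks₁₁.trace - X.toBlocks₂₂.trace

theorem supertrace_add [AddCommGroup α] (X Y : Matrix (m ⊕ n) (m ⊕ n) α) :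
    supertrace (X + Y) = supertrace X + supertrace Y := by
  change (X.toBlocks₁₁ + Y.toBlocks₁₁).trace - (X.toBlocks₂₂ + Y.toBlocks₂₂).trace = _
  rw [trace_add, trace_add, supertrace, supertrace]
  abel

theorem supertrace_smul [Ring α] (c : α) (X : Matrix (m ⊕ n) (m ⊕ n) α) :
    supertrace (c • X) = c * supertrace X := by
  change (c • X.toBlocks₁₁).trace - (c • X.toBlocks₂₂).trace = _
  rw [trace_smul, trace_smul, supertrace, smul_eq_mul, smul_eq_mul, mul_sub]

theorem supertrace_mul_comm_of_odd [Ring α] {N R : Matrix (m ⊕ n) (m ⊕ n) α}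
    (h₁₁ : N.toBlocks₁₁ = 0) (h₂₂ : N.toBlocks₂₂ = 0) (h : ∀ i j, Commute (N i j) (R j i)) :
    supertrace (N * R) = -supertrace (R * N) := by
  obtain ⟨B, C, rfl⟩ : ∃ B C, N = fromBlocks 0 B C 0 :=
    ⟨_, _, by rw [← h₁₁, ← h₂₂, fromBlocks_toBlocks]⟩
  rw [← fromBlocks_toBlocks R]
  simp only [supertrace, fromBlocks_multiply, toBlocks_fromBlocks₁₁, toBlocks_fromBlocks₂₂,
    Matrix.zero_mul, Matrix.mul_zero, zero_add, add_zero]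
  rw [trace_mul_comm_of_commute (A := B) (B := R.toBlocks₂₁) fun i j => h (.inl i) (.inr j),
    trace_mul_comm_of_commute (A := C) (B := R.toBlocks₁₂) fun i j => h (.inr i) (.inl j),
    neg_sub]

theorem mul_supertrace_pow_eq_zero [Ring α] [DecidableEq m] [DecidableEq n]
    {Q N : Matrix (m ⊕ n) (m ⊕ n) α} {c : α} (hQN : Q * N + N * Q = c • 1)
    (h₁₁ : N.toBlocks₁₁ = 0) (h₂₂ : N.toBlocks₂₂ = 0) {q : ℕ}
    (hcomm : ∀ i j, Commute (N i j) ((Q * N ^ q) j i)) : c * supertrace (N ^ q) = 0 :=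
  calc c * supertrace (N ^ q) = supertrace ((Q * N + N * Q) * N ^ q) := by
        rw [hQN, smul_mul, Matrix.one_mul, supertrace_smul]
    _ = supertrace (Q * N ^ (q + 1)) + supertrace (N * (Q * N ^ q)) := by
        rw [Matrix.add_mul, supertrace_add, Matrix.mul_assoc, Matrix.mul_assoc, ← pow_succ']
    _ = 0 := by
        rw [supertrace_mul_comm_of_odd h₁₁ h₂₂ hcomm, Matrix.mul_assoc, ← pow_succ,
          add_neg_cancel]

end Matrix

namespace Module.Basis

variable {R V N : Type*} [CommRing R] [AddCommGroup V] [Module R V] [AddCommGroup N]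
  [Module R N] {ι : Type*} (b : Basis ι R V)

noncomputable def lTensorCoord (i : ι) : N ⊗[R] V →ₗ[R] N :=
  (TensorProduct.rid R N).toLinearMap ∘ₗ LinearMap.lTensor N (b.coord i)

@[simp]
theorem lTensorCoord_tmul (i : ι) (y : N) (x : V) :
    b.lTensorCoord i (y ⊗ₜ[R] x) = b.repr x i • y := by
  simp [lTensorCoord]

theorem sum_lTensorCoord_tmul [Fintype ι] (t : N ⊗[R] V) :
    ∑ i, b.lTensorCoord i t ⊗ₜ[R] b i = t := by
  induction t using TensorProduct.induction_on with
  | zero => simp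
  | tmul y x =>
    simp only [lTensorCoord_tmul, TensorProduct.smul_tmul, ← TensorProduct.tmul_sum, b.sum_repr]
  | add s t hs ht =>
    simp only [map_add, TensorProduct.add_tmul, Finset.sum_add_distrib, hs, ht]

theorem lTensorCoord_map {N' : Type*} [AddCommGroup N'] [Module R N'] (i : ι)
    (φ : N →ₗ[R] N') (t : N ⊗[R] V) :
    b.lTensorCoord i (TensorProduct.map φ LinearMap.id t) = φ (b.lTensorCoord i t) := by
  induction t using TensorProduct.induction_on with
  | zero => simp
  | tmul y x => simp
  | add s t hs ht => simp [hs, ht]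

theorem lTensorCoord_lTensor [Fintype ι] (f : V →ₗ[R] V) (j : ι) (t : N ⊗[R] V) :
    b.lTensorCoord j (LinearMap.lTensor N f t)
      = ∑ m, b.repr (f (b m)) j • b.lTensorCoord m t := by
  conv_lhs => rw [← b.sum_lTensorCoord_tmul t]
  simp only [map_sum, LinearMap.lTensor_tmul, lTensorCoord_tmul]

variable {V₀ V₁ ι₀ ι₁ : Type*} [AddCommGroup V₀] [Module R V₀] [AddCommGroup V₁] [Module R V₁]
  (b₀ : Basis ι₀ R V₀) (b₁ : Basis ι₁ R V₁)

theorem prod_lTensorCoord_inl (i : ι₀) (t : N ⊗[R] (V₀ × V₁)) :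
    (b₀.prod b₁).lTensorCoord (.inl i) t
      = b₀.lTensorCoord i (LinearMap.lTensor N (LinearMap.fst R V₀ V₁) t) := by
  rw [lTensorCoord, lTensorCoord, LinearMap.comp_apply, LinearMap.comp_apply,
    ← LinearMap.lTensor_comp_apply]
  congr 3

theorem prod_lTensorCoord_inr (i : ι₁) (t : N ⊗[R] (V₀ × V₁)) :
    (b₀.prod b₁).lTensorCoord (.inr i) t
      = b₁.lTensorCoord i (LinearMap.lTensor N (LinearMap.snd R V₀ V₁) t) := by
  rw [lTensorCoord, lTensorCoord, LinearMap.comp_apply, LinearMap.comp_apply,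
    ← LinearMap.lTensor_comp_apply]
  congr 3

end Module.Basis

theorem coefTrace_sub_coefTrace_eq_supertrace {R V₀ V₁ N : Type*} [CommRing R] [AddCommGroup V₀]
    [Module R V₀] [AddCommGroup V₁] [Module R V₁] [AddCommGroup N] [Module R N] {n₀ n₁ : ℕ}
    (b₀ : Module.Basis (Fin n₀) R V₀) (b₁ : Module.Basis (Fin n₁) R V₁)
    (G : (V₀ × V₁) →ₗ[R] N ⊗[R] (V₀ × V₁)) :
    coefTrace b₀ (LinearMap.lTensor N (LinearMap.fst R V₀ V₁) ∘ₗ G ∘ₗ LinearMap.inl R V₀ V₁)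
      - coefTrace b₁ (LinearMap.lTensor N (LinearMap.snd R V₀ V₁) ∘ₗ G ∘ₗ LinearMap.inr R V₀ V₁)
      = Matrix.supertrace
          (Matrix.of fun i j => (b₀.prod b₁).lTensorCoord j (G (b₀.prod b₁ i))) := by
  simp only [coefTrace, Matrix.supertrace, Matrix.trace, Matrix.diag, Matrix.toBlocks₁₁,
    Matrix.toBlocks₂₂, Matrix.of_apply, Module.Basis.prod_lTensorCoord_inl,
    Module.Basis.prod_lTensorCoord_inr, Module.Basis.prod_apply, Sum.elim_inl, Sum.elim_inr]
  rfl

open scoped Matrix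

section OneFormMatrix

variable {S M V ι : Type*} [CommRing S] [AddCommGroup M] [Module S M] [AddCommGroup V]
  [Module S V] [Fintype ι] [DecidableEq ι] (b : Module.Basis ι S V)

/-- Row `i` holds the coordinates of `θ (b i)`, placed in degree one of `⋀ M`: with this
convention the iterates of `θ` correspond to matrix powers although the entries do not commute. -/
noncomputable def oneFormMatrix (θ : V →ₗ[S] M ⊗[S] V) : Matrix ι ι (ExteriorAlgebra S M) :=
  Matrix.of fun i j => ExteriorAlgebra.ι S (b.lTensorCoord j (θ (b i)))

theorem toMatrix_mul_oneFormMatrix_add (θ : V →ₗ[S] M ⊗[S] V) (e : V →ₗ[S] V) (c : M)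
    (h : ∀ x, θ (e x) + LinearMap.lTensor M e (θ x) = c ⊗ₜ[S] x) :
    (LinearMap.toMatrix b b e)ᵀ.map (algebraMap S _) * oneFormMatrix b θ
      + oneFormMatrix b θ * (LinearMap.toMatrix b b e)ᵀ.map (algebraMap S _)
      = ExteriorAlgebra.ι S c • 1 := by
  ext i j
  have hij := congrArg (fun t => ExteriorAlgebra.ι S (b.lTensorCoord j t)) (h (b i))
  conv_lhs at hij => rw [← b.sum_repr (e (b i))]
  simp only [map_add, map_sum, map_smul, b.lTensorCoord_lTensor, b.lTensorCoord_tmul,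
    Module.Basis.repr_self, Finsupp.single_apply, Algebra.smul_def] at hij
  simp only [Matrix.add_apply, Matrix.mul_apply, Matrix.map_apply, Matrix.transpose_apply,
    LinearMap.toMatrix_apply, oneFormMatrix, Matrix.of_apply, Matrix.smul_apply,
    Matrix.one_apply, ← Algebra.commutes (A := ExteriorAlgebra S M), hij]
  split_ifs <;> simp_all

theorem commute_oneFormMatrix_apply (θ : V →ₗ[S] M ⊗[S] V) (A : Matrix ι ι S) {q : ℕ}
    (hq : Even q) (i j : ι) :
    Commute (oneFormMatrix b θ i j)
      ((A.map (algebraMap S (ExteriorAlgebra S M)) * oneFormMatrix b θ ^ q) j i) := by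
  refine ExteriorAlgebra.commute_ι_of_mem_pow hq ?_ _
  rw [Matrix.mul_apply]
  refine Submodule.sum_mem _ fun m _ => ?_
  rw [Matrix.map_apply, ← Algebra.smul_def]
  exact Submodule.smul_mem _ _
    (Matrix.pow_apply_mem_pow (fun _ _ => LinearMap.mem_range_self _ _) q m i)

theorem map_wedge_app_tmul_tmul
    (app : ∀ q : ℕ, ((⨂[S] (_ : Fin q), M) ⊗[S] (M ⊗[S] V)) →ₗ[S]
      ((⨂[S] (_ : Fin (q + 1)), M) ⊗[S] V))
    (happ : ∀ (q : ℕ) (ω : Fin q → M) (μ : M) (x : V),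
      app q (PiTensorProduct.tprod S ω ⊗ₜ[S] (μ ⊗ₜ[S] x))
        = PiTensorProduct.tprod S (Fin.snoc ω μ) ⊗ₜ[S] x)
    (wedge : ∀ q : ℕ, (⨂[S] (_ : Fin q), M) →ₗ[S] ExteriorAlgebra S M)
    (hwedge : ∀ (q : ℕ) (ω : Fin q → M),
      wedge q (PiTensorProduct.tprod S ω) = ExteriorAlgebra.ιMulti S q ω)
    {r : ℕ} (t : ⨂[S] (_ : Fin r), M) (μ : M) (x : V) :
    TensorProduct.map (wedge (r + 1)) LinearMap.id (app r (t ⊗ₜ[S] (μ ⊗ₜ[S] x)))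
      = (wedge r t * ExteriorAlgebra.ι S μ) ⊗ₜ[S] x := by
  induction t using PiTensorProduct.induction_on with
  | smul_tprod c ω =>
    simp only [← TensorProduct.smul_tmul', map_smul, happ, TensorProduct.map_tmul,
      LinearMap.id_coe, id_eq, hwedge, ExteriorAlgebra.ιMulti_snoc, smul_mul_assoc]
  | add u v hu hv =>
    rw [TensorProduct.add_tmul, map_add, map_add, hu, hv, ← TensorProduct.add_tmul, ← add_mul,
      ← map_add]

theorem lTensorCoord_map_wedge_iterate (θ : V →ₗ[S] M ⊗[S] V)
    (app : ∀ q : ℕ, ((⨂[S] (_ : Fin q), M) ⊗[S] (M ⊗[S] V)) →ₗ[S]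
      ((⨂[S] (_ : Fin (q + 1)), M) ⊗[S] V))
    (happ : ∀ (q : ℕ) (ω : Fin q → M) (μ : M) (x : V),
      app q (PiTensorProduct.tprod S ω ⊗ₜ[S] (μ ⊗ₜ[S] x))
        = PiTensorProduct.tprod S (Fin.snoc ω μ) ⊗ₜ[S] x)
    (Θ : ∀ q : ℕ, V →ₗ[S] ((⨂[S] (_ : Fin q), M) ⊗[S] V))
    (hΘ₀ : ∀ x : V, Θ 0 x = PiTensorProduct.tprod S (fun i : Fin 0 => i.elim0) ⊗ₜ[S] x)
    (hΘs : ∀ q : ℕ, Θ (q + 1) = app q ∘ₗ LinearMap.lTensor (⨂[S] (_ : Fin q), M) θ ∘ₗ Θ q)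
    (wedge : ∀ q : ℕ, (⨂[S] (_ : Fin q), M) →ₗ[S] ExteriorAlgebra S M)
    (hwedge : ∀ (q : ℕ) (ω : Fin q → M),
      wedge q (PiTensorProduct.tprod S ω) = ExteriorAlgebra.ιMulti S q ω)
    (r : ℕ) (i j : ι) :
    b.lTensorCoord i (TensorProduct.map (wedge r) LinearMap.id (Θ r (b j)))
      = (oneFormMatrix b θ ^ r) j i := by
  induction r generalizing i with
  | zero => simp [hΘ₀, hwedge, Matrix.one_apply, Finsupp.single_apply]
  | succ r ih =>
    have hstep : ∀ m (t : ⨂[S] (_ : Fin r), M), b.lTensorCoord i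
        (TensorProduct.map (wedge (r + 1)) LinearMap.id (app r (t ⊗ₜ[S] θ (b m))))
          = wedge r t * oneFormMatrix b θ m i := by
      intro m t
      conv_lhs => rw [← b.sum_lTensorCoord_tmul (θ (b m))]
      simp only [TensorProduct.tmul_sum, map_sum, map_wedge_app_tmul_tmul app happ wedge hwedge,
        Module.Basis.lTensorCoord_tmul, Module.Basis.repr_self, Finsupp.single_apply,
        ite_smul, one_smul, zero_smul, Finset.sum_ite_eq', Finset.mem_univ, if_true]
      rfl
    rw [hΘs, LinearMap.comp_apply, LinearMap.comp_apply, ← b.sum_lTensorCoord_tmul (Θ r (b j))]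
    simp only [map_sum, LinearMap.lTensor_tmul, hstep, pow_succ, Matrix.mul_apply, ← ih,
      Module.Basis.lTensorCoord_map]

end OneFormMatrix

section BlockStructure

variable {S M V₀ V₁ ι₀ ι₁ : Type*} [CommRing S] [AddCommGroup M] [Module S M]
  [AddCommGroup V₀] [Module S V₀] [AddCommGroup V₁] [Module S V₁]
  (b₀ : Module.Basis ι₀ S V₀) (b₁ : Module.Basis ι₁ S V₁)
  (θ : (V₀ × V₁) →ₗ[S] M ⊗[S] (V₀ × V₁))

theorem oneFormMatrix_prod_toBlocks₁₁
    (h : ∀ x, LinearMap.lTensor M (LinearMap.fst S V₀ V₁) (θ (x, 0)) = 0) :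
    (oneFormMatrix (b₀.prod b₁) θ).toBlocks₁₁ = 0 := by
  ext i j
  simp [oneFormMatrix, Matrix.toBlocks₁₁, Module.Basis.prod_lTensorCoord_inl, h]

theorem oneFormMatrix_prod_toBlocks₂₂
    (h : ∀ x, LinearMap.lTensor M (LinearMap.snd S V₀ V₁) (θ (0, x)) = 0) :
    (oneFormMatrix (b₀.prod b₁) θ).toBlocks₂₂ = 0 := by
  ext i j
  simp [oneFormMatrix, Matrix.toBlocks₂₂, Module.Basis.prod_lTensorCoord_inr, h]

end BlockStructure

theorem commutator_comp_add_lTensor_commutator {k S V : Type*} [CommRing k] [CommRing S]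
    [Algebra k S] [AddCommGroup V] [Module S V] {w : S} (nabla : V → Ω[S⁄k] ⊗[S] V)
    (hnabla : ∀ (a : S) (x : V),
      nabla (a • x) = KaehlerDifferential.D k S a ⊗ₜ[S] x + a • nabla x)
    {e : V →ₗ[S] V} (he : e ∘ₗ e = w • LinearMap.id) {θ : V →ₗ[S] Ω[S⁄k] ⊗[S] V}
    (hθ : ∀ x, θ x = nabla (e x) - LinearMap.lTensor _ e (nabla x)) (x : V) :
    θ (e x) + LinearMap.lTensor _ e (θ x) = KaehlerDifferential.D k S w ⊗ₜ[S] x := by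
  have hee : ∀ y, e (e y) = w • y := fun y => by simpa using LinearMap.congr_fun he y
  have hll : ∀ t, LinearMap.lTensor (Ω[S⁄k]) e (LinearMap.lTensor _ e t) = w • t := fun t => by
    rw [← LinearMap.lTensor_comp_apply, he, LinearMap.lTensor_smul, LinearMap.lTensor_id]
    rfl
  rw [hθ, hθ, map_sub, hee, hnabla, hll]
  abel

section MatrixFactorization

variable {k S E₀ E₁ : Type*} [Field k] [CommRing S] [Algebra k S] [AddCommGroup E₀]
  [AddCommGroup E₁] [Module S E₀] [Module S E₁] {e₀ : E₀ →ₗ[S] E₁} {e₁ : E₁ →ₗ[S] E₀}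

@[simp]
theorem mfDiff_apply (x : E₀ × E₁) : mfDiff e₀ e₁ x = (e₁ x.2, e₀ x.1) := rfl

theorem mfDiff_comp_inl :
    mfDiff e₀ e₁ ∘ₗ LinearMap.inl S E₀ E₁ = LinearMap.inr S E₀ E₁ ∘ₗ e₀ := by
  ext <;> simp

theorem mfDiff_comp_inr :
    mfDiff e₀ e₁ ∘ₗ LinearMap.inr S E₀ E₁ = LinearMap.inl S E₀ E₁ ∘ₗ e₁ := by
  ext <;> simp

theorem mfDiff_comp_mfDiff {w : S} (he₀ : e₁ ∘ₗ e₀ = w • LinearMap.id)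
    (he₁ : e₀ ∘ₗ e₁ = w • LinearMap.id) : mfDiff e₀ e₁ ∘ₗ mfDiff e₀ e₁ = w • LinearMap.id := by
  ext x
  · simpa using LinearMap.congr_fun he₀ x
  · simp
  · simp
  · simpa using LinearMap.congr_fun he₁ x

variable [Module k E₀] [Module k E₁] [IsScalarTower k S E₀] [IsScalarTower k S E₁]
  {na₀ : E₀ →ₗ[k] (Ω[S⁄k] ⊗[S] E₀)} {na₁ : E₁ →ₗ[k] (Ω[S⁄k] ⊗[S] E₁)}

theorem connPair_smul
    (hna₀ : ∀ (a : S) (x : E₀), na₀ (a • x) = KaehlerDifferential.D k S a ⊗ₜ[S] x + a • na₀ x)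
    (hna₁ : ∀ (a : S) (x : E₁), na₁ (a • x) = KaehlerDifferential.D k S a ⊗ₜ[S] x + a • na₁ x)
    (a : S) (x : E₀ × E₁) :
    connPair na₀ na₁ (a • x)
      = KaehlerDifferential.D k S a ⊗ₜ[S] x + a • connPair na₀ na₁ x := by
  simp only [connPair, Prod.smul_fst, Prod.smul_snd, hna₀, hna₁, map_add, map_smul,
    LinearMap.lTensor_tmul, LinearMap.inl_apply, LinearMap.inr_apply]
  rw [smul_add, add_add_add_comm, ← TensorProduct.tmul_add, Prod.mk_add_mk, zero_add, add_zero]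

variable {θ : (E₀ × E₁) →ₗ[S] (Ω[S⁄k] ⊗[S] (E₀ × E₁))}

theorem lTensor_fst_commutator_inl (hθ : ∀ x, θ x = connPair na₀ na₁ (mfDiff e₀ e₁ x)
    - LinearMap.lTensor (Ω[S⁄k]) (mfDiff e₀ e₁) (connPair na₀ na₁ x)) (x : E₀) :
    LinearMap.lTensor (Ω[S⁄k]) (LinearMap.fst S E₀ E₁) (θ (x, 0)) = 0 := by
  simp [hθ, connPair, ← LinearMap.lTensor_comp_apply, mfDiff_comp_inl, ← LinearMap.comp_assoc]

theorem lTensor_snd_commutator_inr (hθ : ∀ x, θ x = connPair na₀ na₁ (mfDiff e₀ e₁ x)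
    - LinearMap.lTensor (Ω[S⁄k]) (mfDiff e₀ e₁) (connPair na₀ na₁ x)) (x : E₁) :
    LinearMap.lTensor (Ω[S⁄k]) (LinearMap.snd S E₀ E₁) (θ (0, x)) = 0 := by
  simp [hθ, connPair, ← LinearMap.lTensor_comp_apply, mfDiff_comp_inr, ← LinearMap.comp_assoc]

end MatrixFactorization

theorem stmt_14_general {k : Type*} [Field k]
    {S : Type*} [CommRing S] [Algebra k S] (w : S)
    {E₀ E₁ : Type*} [AddCommGroup E₀] [AddCommGroup E₁]
    [Module S E₀] [Module S E₁] [Module k E₀] [Module k E₁]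
    [IsScalarTower k S E₀] [IsScalarTower k S E₁]
    {n₀ n₁ : ℕ} (b₀ : Module.Basis (Fin n₀) S E₀) (b₁ : Module.Basis (Fin n₁) S E₁)
    (e₀ : E₀ →ₗ[S] E₁) (e₁ : E₁ →ₗ[S] E₀)
    (he₀ : e₁ ∘ₗ e₀ = w • (LinearMap.id : E₀ →ₗ[S] E₀))
    (he₁ : e₀ ∘ₗ e₁ = w • (LinearMap.id : E₁ →ₗ[S] E₁))
    (na₀ : E₀ →ₗ[k] (Ω[S⁄k] ⊗[S] E₀)) (na₁ : E₁ →ₗ[k] (Ω[S⁄k] ⊗[S] E₁))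
    (hna₀ : ∀ (a : S) (x : E₀),
      na₀ (a • x) = (KaehlerDifferential.D k S a) ⊗ₜ[S] x + a • na₀ x)
    (hna₁ : ∀ (a : S) (x : E₁),
      na₁ (a • x) = (KaehlerDifferential.D k S a) ⊗ₜ[S] x + a • na₁ x)
    (θ : (E₀ × E₁) →ₗ[S] (Ω[S⁄k] ⊗[S] (E₀ × E₁)))
    (hθ : ∀ x : E₀ × E₁,
      θ x = connPair na₀ na₁ (mfDiff e₀ e₁ x)
        - (LinearMap.lTensor (Ω[S⁄k]) (mfDiff e₀ e₁)) (connPair na₀ na₁ x))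
    (app : ∀ q : ℕ,
      ((⨂[S] (_ : Fin q), Ω[S⁄k]) ⊗[S] (Ω[S⁄k] ⊗[S] (E₀ × E₁))) →ₗ[S]
        ((⨂[S] (_ : Fin (q + 1)), Ω[S⁄k]) ⊗[S] (E₀ × E₁)))
    (happ : ∀ (q : ℕ) (ω : Fin q → Ω[S⁄k]) (μ : Ω[S⁄k]) (x : E₀ × E₁),
      app q ((PiTensorProduct.tprod S ω) ⊗ₜ[S] (μ ⊗ₜ[S] x)) = (PiTensorProduct.tprod S (Fin.snoc ω μ)) ⊗ₜ[S] x)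
    (Θ : ∀ q : ℕ, (E₀ × E₁) →ₗ[S] ((⨂[S] (_ : Fin q), Ω[S⁄k]) ⊗[S] (E₀ × E₁)))
    (hΘ₀ : ∀ x : E₀ × E₁, Θ 0 x = (PiTensorProduct.tprod S (fun i : Fin 0 => i.elim0)) ⊗ₜ[S] x)
    (hΘs : ∀ q : ℕ,
      Θ (q + 1) = app q ∘ₗ (LinearMap.lTensor (⨂[S] (_ : Fin q), Ω[S⁄k]) θ) ∘ₗ Θ q)
    (wedge : ∀ q : ℕ,
      (⨂[S] (_ : Fin q), Ω[S⁄k]) →ₗ[S] ExteriorAlgebra S (Ω[S⁄k]))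
    (hwedge : ∀ (q : ℕ) (ω : Fin q → Ω[S⁄k]),
      wedge q (PiTensorProduct.tprod S ω) = ExteriorAlgebra.ιMulti S q ω) :
    ∀ q : ℕ, Even q →
      ExteriorAlgebra.ι S (KaehlerDifferential.D k S w) *
        (coefTrace b₀
            ((LinearMap.lTensor (ExteriorAlgebra S (Ω[S⁄k])) (LinearMap.fst S E₀ E₁)) ∘ₗ
              (TensorProduct.map (wedge q) LinearMap.id) ∘ₗ Θ q ∘ₗ (LinearMap.inl S E₀ E₁))
          - coefTrace b₁
            ((LinearMap.lTensor (ExteriorAlgebra S (Ω[S⁄k])) (LinearMap.snd S E₀ E₁)) ∘ₗ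
              (TensorProduct.map (wedge q) LinearMap.id) ∘ₗ Θ q ∘ₗ (LinearMap.inr S E₀ E₁)))
        = 0 := by
  intro q hq
  have hθe := commutator_comp_add_lTensor_commutator (connPair na₀ na₁) (connPair_smul hna₀ hna₁)
    (mfDiff_comp_mfDiff he₀ he₁) hθ
  have htrace := coefTrace_sub_coefTrace_eq_supertrace b₀ b₁
    (TensorProduct.map (wedge q) LinearMap.id ∘ₗ Θ q)
  simp only [LinearMap.comp_assoc] at htrace
  calc _ = ExteriorAlgebra.ι S (KaehlerDifferential.D k S w)
        * Matrix.supertrace (oneFormMatrix (b₀.prod b₁) θ ^ q) := by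
        rw [htrace]
        congr 2
        ext i j
        exact lTensorCoord_map_wedge_iterate _ θ app happ Θ hΘ₀ hΘs wedge hwedge q j i
    _ = 0 := Matrix.mul_supertrace_pow_eq_zero (toMatrix_mul_oneFormMatrix_add _ θ _ _ hθe)
        (oneFormMatrix_prod_toBlocks₁₁ b₀ b₁ θ (lTensor_fst_commutator_inl hθ))
        (oneFormMatrix_prod_toBlocks₂₂ b₀ b₁ θ (lTensor_snd_commutator_inr hθ))
        (commute_oneFormMatrix_apply _ θ _ hq)

/-- Let `(E, e)` be a matrix factorization of `w` over `S` with a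
connection `∇`, `θ = [∇, e]`.  For every even `q`, `dw ∧ str((∧ ⊗ 1) ∘ θ^q) = 0` in
`⋀^{q+1} Ω` (inside the exterior algebra of `Ω`), where `str = tr (θ^q on E₀) − tr (θ^q on E₁)`
is the supertrace, computed with chosen bases of `E₀` and `E₁`.  Consequently the Chern
character `ch(E) = str(Σ_q [∇,e]^q / q!)` of a matrix factorization with a global
connection is a cocycle in the 2-periodic complex `(⊕_q ⋀^q Ω, dw ∧ −)`. -/
theorem stmt_14 {k : Type*} [Field k] [CharZero k]
    {S : Type*} [CommRing S] [Algebra k S] (w : S)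
    {E₀ E₁ : Type*} [AddCommGroup E₀] [AddCommGroup E₁]
    [Module S E₀] [Module S E₁] [Module k E₀] [Module k E₁]
    [IsScalarTower k S E₀] [IsScalarTower k S E₁]
    {n₀ n₁ : ℕ} (b₀ : Module.Basis (Fin n₀) S E₀) (b₁ : Module.Basis (Fin n₁) S E₁)
    (e₀ : E₀ →ₗ[S] E₁) (e₁ : E₁ →ₗ[S] E₀)
    (he₀ : e₁ ∘ₗ e₀ = w • (LinearMap.id : E₀ →ₗ[S] E₀))
    (he₁ : e₀ ∘ₗ e₁ = w • (LinearMap.id : E₁ →ₗ[S] E₁))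
    (na₀ : E₀ →ₗ[k] (Ω[S⁄k] ⊗[S] E₀)) (na₁ : E₁ →ₗ[k] (Ω[S⁄k] ⊗[S] E₁))
    (hna₀ : ∀ (a : S) (x : E₀),
      na₀ (a • x) = (KaehlerDifferential.D k S a) ⊗ₜ[S] x + a • na₀ x)
    (hna₁ : ∀ (a : S) (x : E₁),
      na₁ (a • x) = (KaehlerDifferential.D k S a) ⊗ₜ[S] x + a • na₁ x)
    (θ : (E₀ × E₁) →ₗ[S] (Ω[S⁄k] ⊗[S] (E₀ × E₁)))
    (hθ : ∀ x : E₀ × E₁,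
      θ x = connPair na₀ na₁ (mfDiff e₀ e₁ x)
        - (LinearMap.lTensor (Ω[S⁄k]) (mfDiff e₀ e₁)) (connPair na₀ na₁ x))
    (app : ∀ q : ℕ,
      ((⨂[S] (_ : Fin q), Ω[S⁄k]) ⊗[S] (Ω[S⁄k] ⊗[S] (E₀ × E₁))) →ₗ[S]
        ((⨂[S] (_ : Fin (q + 1)), Ω[S⁄k]) ⊗[S] (E₀ × E₁)))
    (happ : ∀ (q : ℕ) (ω : Fin q → Ω[S⁄k]) (μ : Ω[S⁄k]) (x : E₀ × E₁),
      app q ((PiTensorProduct.tprod S ω) ⊗ₜ[S] (μ ⊗ₜ[S] x)) = (PiTensorProduct.tprod S (Fin.snoc ω μ)) ⊗ₜ[S] x)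
    (Θ : ∀ q : ℕ, (E₀ × E₁) →ₗ[S] ((⨂[S] (_ : Fin q), Ω[S⁄k]) ⊗[S] (E₀ × E₁)))
    (hΘ₀ : ∀ x : E₀ × E₁, Θ 0 x = (PiTensorProduct.tprod S (fun i : Fin 0 => i.elim0)) ⊗ₜ[S] x)
    (hΘs : ∀ q : ℕ,
      Θ (q + 1) = app q ∘ₗ (LinearMap.lTensor (⨂[S] (_ : Fin q), Ω[S⁄k]) θ) ∘ₗ Θ q)
    (wedge : ∀ q : ℕ,
      (⨂[S] (_ : Fin q), Ω[S⁄k]) →ₗ[S] ExteriorAlgebra S (Ω[S⁄k]))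
    (hwedge : ∀ (q : ℕ) (ω : Fin q → Ω[S⁄k]),
      wedge q (PiTensorProduct.tprod S ω) = ExteriorAlgebra.ιMulti S q ω) :
    ∀ q : ℕ, Even q →
      ExteriorAlgebra.ι S (KaehlerDifferential.D k S w) *
        (coefTrace b₀
            ((LinearMap.lTensor (ExteriorAlgebra S (Ω[S⁄k])) (LinearMap.fst S E₀ E₁)) ∘ₗ
              (TensorProduct.map (wedge q) LinearMap.id) ∘ₗ Θ q ∘ₗ (LinearMap.inl S E₀ E₁))
          - coefTrace b₁
            ((LinearMap.lTensor (ExteriorAlgebra S (Ω[S⁄k])) (LinearMap.snd S E₀ E₁)) ∘ₗ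
              (TensorProduct.map (wedge q) LinearMap.id) ∘ₗ Θ q ∘ₗ (LinearMap.inr S E₀ E₁)))
        = 0 :=
  stmt_14_general w b₀ b₁ e₀ e₁ he₀ he₁ na₀ na₁ hna₀ hna₁ θ hθ app happ Θ hΘ₀ hΘs wedge hwedge
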